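/- Let x ∈ ℝ with |x| ≤ M, and let θ₀,…,θ_{N−1} be angles with binary selectors δ₀,…,δ_{N−1} ∈ {0,1} satisfying Σ δk = 1. Suppose for each k the variable x_{c,k} satisfies x·cos(θk) − M(1−δk) ≤ x_{c,k} ≤ x·cos(θk) + M(1−δk) and −M·δk ≤ x_{c,k} ≤ M·δk. Then Σ_{k} x_{c,k} = x·cos(θ), where θ = Σ_k δk·θk is the selected angle. -/
import Mathlib


open Finset in
/-- Big-M linearization of the product of a continuous variable `x` with `cos θ`,
where `θ` is selected from discretized angles `θ k` via one-hot binaries `δ k`. -/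
theorem continuous_times_trig_bigM (N : ℕ) (x M : ℝ) (θ δ xc : Fin N → ℝ)
    (hxM : |x| ≤ M)
    (hδ : ∀ k, δ k = 0 ∨ δ k = 1)
    (hsum : ∑ k, δ k = 1)
    (h1 : ∀ k, xc k ≤ x * Real.cos (θ k) + M * (1 - δ k))
    (h2 : ∀ k, x * Real.cos (θ k) - M * (1 - δ k) ≤ xc k)
    (h3 : ∀ k, xc k ≤ M * δ k)
    (h4 : ∀ k, -(M * δ k) ≤ xc k) :
    ∑ k, xc k = x * Real.cos (∑ k, δ k * θ k) := by
  have hj : ∃ j, δ j = 1 := by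
    by_contra h
    push_neg at h
    have h0 : ∀ k, δ k = 0 := fun k => (hδ k).resolve_right (h k)
    simp [h0] at hsum
  obtain ⟨j, hjd⟩ := hj
  have hsplit : δ j + ∑ i ∈ Finset.univ.erase j, δ i = 1 := by
    rw [Finset.add_sum_erase Finset.univ δ (Finset.mem_univ j)]; exact hsum
  have hrest0 : ∑ i ∈ Finset.univ.erase j, δ i = 0 := by linarith
  have hrest : ∀ k, k ≠ j → δ k = 0 := by
    intro k hk
    have := (Finset.sum_eq_zero_iff_of_nonneg (fun i _ => by
      rcases hδ i with h | h <;> simp [h])).mp hrest0 k (by simp [hk])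
    exact this
  have hxc0 : ∀ k, k ≠ j → xc k = 0 := by
    intro k hk
    have h3' := h3 k; have h4' := h4 k
    rw [hrest k hk] at h3' h4'
    simp at h3' h4'; linarith
  have hxcj : xc j = x * Real.cos (θ j) := by
    have h1' := h1 j; have h2' := h2 j
    rw [hjd] at h1' h2'
    simp at h1' h2'; linarith
  have hθ : ∑ k, δ k * θ k = θ j := by
    rw [Finset.sum_eq_single j]
    · rw [hjd]; ring
    · intro k _ hk; rw [hrest k hk]; ring
    · intro h; exact absurd (Finset.mem_univ j) h
  have hs : ∑ k, xc k = xc j := by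
    rw [Finset.sum_eq_single j]
    · intro k _ hk; exact hxc0 k hk
    · intro h; exact absurd (Finset.mem_univ j) h
  rw [hs, hθ, hxcj]
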